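/- arXiv:2108.07024 — 3 statements merged into one kernel-verified Lean document; each statement's English description precedes it below -/
import Mathlib

section
/- Let 0 < a < 1 and r = (1 − a²)/2. For the 5×5 matrix A with rows [0, √(1−a²), a√(1−a²), a²√(1−a²), a³√(1−a²)], [0, a, a²−1, a(a²−1), a²(a²−1)], [0, 0, a, a²−1, a(a²−1)], [0, 0, 0, a, a²−1], [0, 0, 0, 0, a], the columns of A form a set where the first column is zero and the last four columns are orthonormal; i.e., A is a partial isometry of rank 4. -/
open Matrix

theorem c45_matrix_partial_isometry_rank_four
    (a : ℝ) (ha : 0 < a) (ha1 : a < 1)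
    (A : Matrix (Fin 5) (Fin 5) ℝ)
    (hA : A = !![0, Real.sqrt (1 - a ^ 2), a * Real.sqrt (1 - a ^ 2),
                  a ^ 2 * Real.sqrt (1 - a ^ 2), a ^ 3 * Real.sqrt (1 - a ^ 2);
                 0, a, a ^ 2 - 1, a * (a ^ 2 - 1), a ^ 2 * (a ^ 2 - 1);
                 0, 0, a, a ^ 2 - 1, a * (a ^ 2 - 1);
                 0, 0, 0, a, a ^ 2 - 1;
                 0, 0, 0, 0, a]) :
    Aᴴ * A = Matrix.diagonal ![0, 1, 1, 1, 1] ∧ A.rank = 4 := by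
  have hs : Real.sqrt (1 - a ^ 2) ^ 2 = 1 - a ^ 2 :=
    Real.sq_sqrt (by nlinarith)
  have key : Aᴴ * A = Matrix.diagonal ![0, 1, 1, 1, 1] := by
    subst hA
    ext i j
    fin_cases i <;> fin_cases j <;>
      simp [Matrix.mul_apply, Fin.sum_univ_succ, Matrix.diagonal] <;>
      (try ring_nf) <;> (try rw [hs]) <;> ring_nf
  refine ⟨key, ?_⟩
  have := Matrix.rank_conjTranspose_mul_self A
  rw [key] at this
  rw [← this, Matrix.rank_diagonal]
  have e : {i : Fin 5 // ![0, (1:ℝ), 1, 1, 1] i ≠ 0} ≃ {i : Fin 5 // i ≠ 0} :=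
    Equiv.subtypeEquivRight (fun i => by fin_cases i <;> simp)
  rw [Fintype.card_congr e]
  decide
end

section
/- Let 0 < a < 1, r = (1−a²)/2, and p(λ) = λ³ + √(1−2r)·cos θ·λ² + (r² − 2r)λ + r²√(1−2r)·cos θ for a fixed θ ∈ ℝ. Then p(r) < 0 and p(−r) > 0; consequently p has a real root greater than r and a real root less than −r. -/
theorem cubic_factor_roots_outside
    (a r θ : ℝ) (ha : 0 < a) (ha1 : a < 1) (hr : r = (1 - a ^ 2) / 2)
    (p : ℝ → ℝ)
    (hp : p = fun lam => lam ^ 3 + Real.sqrt (1 - 2 * r) * Real.cos θ * lam ^ 2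
        + (r ^ 2 - 2 * r) * lam + r ^ 2 * Real.sqrt (1 - 2 * r) * Real.cos θ) :
    p r < 0 ∧ 0 < p (-r) ∧
      (∃ x : ℝ, r < x ∧ p x = 0) ∧ (∃ y : ℝ, y < -r ∧ p y = 0) := by
  have hs : Real.sqrt (1 - 2 * r) = a := by
    have : 1 - 2 * r = a ^ 2 := by rw [hr]; ring
    rw [this, Real.sqrt_sq ha.le]
  have hrpos : 0 < r := by nlinarith
  have hrhalf : r < 1 / 2 := by nlinarith
  have hc1 : Real.cos θ ≤ 1 := Real.cos_le_one θ
  have hc2 : -1 ≤ Real.cos θ := Real.neg_one_le_cos θ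
  set c := Real.cos θ with hc
  have hb1 : a * c < 1 - r := by nlinarith
  have hb2 : -(1 - r) < a * c := by nlinarith
  have hr2 : 0 < r ^ 2 := by positivity
  have key1 := mul_lt_mul_of_pos_left hb1 hr2
  have key2 := mul_lt_mul_of_pos_left hb2 hr2
  have hpr : p r < 0 := by
    rw [hp]; simp only [hs]; nlinarith [key1]
  have hpnr : 0 < p (-r) := by
    rw [hp]; simp only [hs]; nlinarith [key2]
  have hcont : Continuous p := by rw [hp]; fun_prop
  have hp3 : 0 < p 3 := by
    rw [hp]; simp only [hs]; nlinarith [key2, hb2, hrhalf, hrpos, hr2]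
  have hpn3 : p (-3) < 0 := by
    rw [hp]; simp only [hs]; nlinarith [key1, hb1, hrhalf, hrpos, hr2]
  refine ⟨hpr, hpnr, ?_, ?_⟩
  · have h := intermediate_value_Icc (by linarith : r ≤ (3:ℝ)) hcont.continuousOn
    have : (0:ℝ) ∈ Set.Icc (p r) (p 3) := ⟨hpr.le, hp3.le⟩
    obtain ⟨x, hx, hx0⟩ := h this
    refine ⟨x, ?_, hx0⟩
    rcases eq_or_lt_of_le hx.1 with h' | h'
    · exact absurd (h' ▸ hx0) hpr.ne
    · exact h'
  · have h := intermediate_value_Icc (by linarith : (-3:ℝ) ≤ -r) hcont.continuousOn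
    have : (0:ℝ) ∈ Set.Icc (p (-3)) (p (-r)) := ⟨hpn3.le, hpnr.le⟩
    obtain ⟨y, hy, hy0⟩ := h this
    refine ⟨y, ?_, hy0⟩
    rcases eq_or_lt_of_le hy.2 with h' | h'
    · exact absurd (h' ▸ hy0) hpnr.ne'
    · exact h'
end

section
/- Elliptical Range Theorem consequence: for the 2×2 matrix B = [[0, √(1−a²)],[0, a]] with 0 < a < 1, the numerical range W(B) is the closed elliptical disk with foci 0 and a and minor axis of length √(1−a²); in particular, the leftmost point of W(B) is (a−1)/2. -/
/-!
Writing a unit vector as `x = (x₀, x₁)` and `t = ‖x₁‖²`, the quadratic form of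
`B = !![0, c; 0, a]` is `xᴴ B x = c x̄₀ x₁ + a t`, where `c x̄₀ x₁` has modulus `c √(t (1 - t))` and
an arbitrary phase. So `W(B)` is the union over `t ∈ [0, 1]` of the circles of radius
`c √(t (1 - t))` about `t a`. For `c² = 1 - a²`, a point `z` lies on one of these circles iff a
quadratic in `t` has a root in `[0, 1]`, iff its discriminant is nonnegative, which is the
equation of the ellipse with foci `0, a` and major axis `1`. Its leftmost point is `(a - 1) / 2`.
-/

open Matrix Complex Set ComplexConjugate

def numericalRange {n : Type*} [Fintype n] (B : Matrix n n ℂ) : Set ℂ :=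
  {w | ∃ x : EuclideanSpace ℂ n, ‖x‖ = 1 ∧ star (x : n → ℂ) ⬝ᵥ B.mulVec x = w}

theorem star_dotProduct_mulVec_fin_two {R : Type*} [CommSemiring R] [StarRing R]
    (p q r s : R) (x : Fin 2 → R) :
    star x ⬝ᵥ !![p, q; r, s] *ᵥ x =
      p * (star (x 0) * x 0) + q * (star (x 0) * x 1) + r * (star (x 1) * x 0) +
        s * (star (x 1) * x 1) := by
  simp only [dotProduct, Pi.star_apply, mulVec, of_apply, cons_val', cons_val_fin_one,
    Fin.sum_univ_two, cons_val_zero, cons_val_one]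
  ring

theorem EuclideanSpace.norm_eq_one_iff_fin_two {𝕜 : Type*} [RCLike 𝕜]
    (x : EuclideanSpace 𝕜 (Fin 2)) : ‖x‖ = 1 ↔ ‖x 0‖ ^ 2 + ‖x 1‖ ^ 2 = 1 := by
  rw [EuclideanSpace.norm_eq, Fin.sum_univ_two, Real.sqrt_eq_one]

theorem mem_numericalRange_iff_exists_circle (a : ℂ) {c : ℝ} (hc : 0 ≤ c) (z : ℂ) :
    z ∈ numericalRange !![0, (c : ℂ); 0, a] ↔
      ∃ t ∈ Icc (0 : ℝ) 1, ‖z - t * a‖ ^ 2 = c ^ 2 * (t * (1 - t)) := by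
  constructor
  · rintro ⟨x, hx, rfl⟩
    rw [EuclideanSpace.norm_eq_one_iff_fin_two] at hx
    refine ⟨‖x 1‖ ^ 2, ⟨by positivity, by linarith [sq_nonneg ‖x 0‖]⟩, ?_⟩
    have hcircle : star (x : Fin 2 → ℂ) ⬝ᵥ !![0, (c : ℂ); 0, a] *ᵥ x - (‖x 1‖ ^ 2 : ℝ) * a
        = c * (conj (x 0) * x 1) := by
      rw [star_dotProduct_mulVec_fin_two]
      simp only [star_def, conj_mul']
      push_cast
      ring
    rw [hcircle, norm_mul, norm_mul, norm_conj, norm_real, Real.norm_of_nonneg hc, ← hx]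
    ring
  · rintro ⟨t, ⟨ht₀, ht₁⟩, hz⟩
    set p := z - t * a
    have hp : ‖p‖ = c * (√(1 - t) * √t) := by
      rw [← Real.sqrt_mul (sub_nonneg.2 ht₁), ← Real.sqrt_sq hc, ← Real.sqrt_mul (sq_nonneg c),
        mul_comm (1 - t), ← hz, Real.sqrt_sq (norm_nonneg p)]
    -- The phase of `x₀` is chosen so that `c x̄₀ x₁` points in the direction of `p`.
    set x : EuclideanSpace ℂ (Fin 2) := !₂[√(1 - t) * conj (exp (arg p * I)), √t]
    refine ⟨x, ?_, ?_⟩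
    · rw [EuclideanSpace.norm_eq_one_iff_fin_two]
      simp [x, norm_exp_ofReal_mul_I, Real.sq_sqrt ht₀, Real.sq_sqrt (sub_nonneg.2 ht₁)]
    · calc star (x : Fin 2 → ℂ) ⬝ᵥ !![0, (c : ℂ); 0, a] *ᵥ x
            = ((c * (√(1 - t) * √t) : ℝ) : ℂ) * exp (arg p * I) + t * a := by
              rw [star_dotProduct_mulVec_fin_two]
              simp only [x, cons_val_zero, cons_val_one, cons_val_fin_one, star_mul', star_def,
                conj_conj, conj_ofReal, zero_mul, zero_add, add_zero]
              rw [← ofReal_mul √t, Real.mul_self_sqrt ht₀]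
              push_cast
              ring
          _ = z := by rw [← hp, norm_mul_exp_arg_mul_I, sub_add_cancel]

theorem exists_circle_iff_ellipse {a : ℝ} (ha : |a| < 1) (x y : ℝ) :
    (∃ t ∈ Icc (0 : ℝ) 1, (x - t * a) ^ 2 + y ^ 2 = (1 - a ^ 2) * (t * (1 - t))) ↔
      (1 - a ^ 2) * (2 * x - a) ^ 2 + 4 * y ^ 2 ≤ 1 - a ^ 2 := by
  have hk : 0 < 1 - a ^ 2 := sub_pos.2 ((sq_lt_one_iff_abs_lt_one a).2 ha)
  constructor
  · rintro ⟨t, -, ht⟩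
    -- On the circle, the ellipse inequality reads `-(2a(x - ta) - (1 - a²)(2t - 1))² ≤ 0`.
    nlinarith [sq_nonneg (2 * a * (x - t * a) - (1 - a ^ 2) * (2 * t - 1))]
  · intro h
    -- The circle equation is `t² - b t + (x² + y²) = 0`; take its larger root.
    set b := 2 * a * x + (1 - a ^ 2)
    set D := b ^ 2 - 4 * (x ^ 2 + y ^ 2)
    have hD : 0 ≤ D := by nlinarith
    refine ⟨(b + √D) / 2, ⟨?_, ?_⟩, ?_⟩
    · nlinarith [Real.sqrt_nonneg D, sq_nonneg (a + (2 * x - a))]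
    · have : √D ≤ 2 - b := Real.sqrt_le_iff.2
        ⟨by nlinarith [sq_nonneg (a - (2 * x - a))], by nlinarith [sq_nonneg (x - a), sq_nonneg y]⟩
      linarith
    · linear_combination (1 / 4 : ℝ) * Real.sq_sqrt hD

theorem norm_add_norm_sub_le_one_iff {a : ℝ} (ha : |a| < 1) (z : ℂ) :
    ‖z‖ + ‖z - a‖ ≤ 1 ↔ (1 - a ^ 2) * (2 * z.re - a) ^ 2 + 4 * z.im ^ 2 ≤ 1 - a ^ 2 := by
  set r₁ := ‖z‖
  set r₂ := ‖z - a‖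
  have hr₁ : r₁ ^ 2 = z.re ^ 2 + z.im ^ 2 := by
    rw [Complex.sq_norm, normSq_apply]
    ring
  have hr₂ : r₂ ^ 2 = (z.re - a) ^ 2 + z.im ^ 2 := by
    rw [Complex.sq_norm, normSq_apply, sub_re, sub_im, ofReal_re, ofReal_im, sub_zero]
    ring
  have hpos : 0 < 1 - (r₁ - r₂) ^ 2 := by
    rw [sub_pos, sq_lt_one_iff_abs_lt_one]
    refine (abs_norm_sub_norm_le z (z - a)).trans_lt ?_
    simpa using ha
  have hid : (1 - (r₁ + r₂) ^ 2) * (1 - (r₁ - r₂) ^ 2)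
      = 1 - a ^ 2 - ((1 - a ^ 2) * (2 * z.re - a) ^ 2 + 4 * z.im ^ 2) := by
    linear_combination (r₁ ^ 2 - r₂ ^ 2 + 2 * z.re * a - a ^ 2 - 2) * hr₁
      - (r₁ ^ 2 - r₂ ^ 2 + 2 * z.re * a - a ^ 2 + 2) * hr₂
  calc r₁ + r₂ ≤ 1 ↔ (r₁ + r₂) ^ 2 ≤ 1 := (sq_le_one_iff₀ (by positivity)).symm
    _ ↔ 0 ≤ (1 - (r₁ + r₂) ^ 2) * (1 - (r₁ - r₂) ^ 2) := by
      rw [mul_nonneg_iff_of_pos_right hpos, sub_nonneg]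
    _ ↔ _ := by rw [hid, sub_nonneg]

theorem isLeast_re_ellipse {a : ℝ} (ha : |a| ≤ 1) :
    IsLeast (re '' {z : ℂ | ‖z‖ + ‖z - a‖ ≤ 1}) ((a - 1) / 2) := by
  refine ⟨⟨((a - 1) / 2 : ℝ), ?_, ofReal_re _⟩, ?_⟩
  · rw [mem_ofPred_eq, ← ofReal_sub, norm_real, norm_real, Real.norm_eq_abs, Real.norm_eq_abs,
      abs_of_nonpos (by linarith [le_abs_self a]), abs_of_nonpos (by linarith [neg_abs_le a])]
    linarith
  · rintro _ ⟨z, hz, rfl⟩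
    have h₀ := re_le_norm (-z)
    have h₁ := re_le_norm (a - z)
    rw [neg_re, norm_neg] at h₀
    rw [sub_re, ofReal_re, norm_sub_rev] at h₁
    linarith [hz.out]

theorem numericalRange_eq_ellipse {a : ℝ} (ha : |a| < 1) :
    numericalRange !![0, ((√(1 - a ^ 2) : ℝ) : ℂ); 0, (a : ℂ)] =
      {z : ℂ | ‖z‖ + ‖z - a‖ ≤ 1} := by
  ext z
  rw [mem_numericalRange_iff_exists_circle _ (Real.sqrt_nonneg _), mem_ofPred_eq,
    norm_add_norm_sub_le_one_iff ha, ← exists_circle_iff_ellipse ha,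
    Real.sq_sqrt (sub_pos.2 ((sq_lt_one_iff_abs_lt_one a).2 ha)).le]
  refine exists_congr fun t => and_congr_right fun _ => ?_
  rw [Complex.sq_norm, normSq_apply]
  simp only [sub_re, mul_re, ofReal_re, ofReal_im, mul_zero, sub_zero, sub_im, mul_im, zero_mul,
    add_zero]
  ring_nf

theorem elliptical_range_two_by_two
    (a : ℝ) (ha : 0 < a) (ha1 : a < 1)
    (B : Matrix (Fin 2) (Fin 2) ℂ)
    (hB : B = !![(0 : ℂ), Real.sqrt (1 - a ^ 2); 0, (a : ℂ)]) :
    {w : ℂ | ∃ x : EuclideanSpace ℂ (Fin 2),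
        ‖x‖ = 1 ∧ star (x : Fin 2 → ℂ) ⬝ᵥ B.mulVec x = w}
      = {z : ℂ | ‖z‖ + ‖z - (a : ℂ)‖ ≤ 1} ∧
    IsLeast {t : ℝ | ∃ z ∈ {w : ℂ | ∃ x : EuclideanSpace ℂ (Fin 2),
        ‖x‖ = 1 ∧ star (x : Fin 2 → ℂ) ⬝ᵥ B.mulVec x = w}, t = z.re}
      ((a - 1) / 2) := by
  have ha' : |a| < 1 := abs_lt.2 ⟨by linarith, ha1⟩
  have hW : numericalRange B = {z : ℂ | ‖z‖ + ‖z - (a : ℂ)‖ ≤ 1} :=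
    hB ▸ numericalRange_eq_ellipse ha'
  refine ⟨hW, ?_⟩
  change IsLeast {t : ℝ | ∃ z ∈ numericalRange B, t = z.re} _
  simpa only [hW, image, eq_comm] using isLeast_re_ellipse ha'.le
end
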